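/- arXiv:2011.06939 — 4 statements merged into one kernel-verified Lean document; each statement's English description precedes it below -/
import Mathlib

section
/- Let f be a monotone submodular function with f(∅)=0, and let C = {j₁,…,j_r} be a finite set ordered arbitrarily. Define weights w_i = f({j₁,…,j_i}) - f({j₁,…,j_{i-1}}) (marginal gains). Then for every subset C' ⊆ C, f(C') ≥ ∑_{j_i ∈ C'} w_i. -/
/-!
Let `Pₖ` be the set of the first `k` elements of the list. Submodularity (`C' ∩ Pᵢ ⊆ Pᵢ`) says
that the gain `wᵢ` of adding `jᵢ ∈ C'` to `Pᵢ` is at most the gain of adding it to `C' ∩ Pᵢ`, while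
for `jᵢ ∉ C'` the sets `C' ∩ Pᵢ` and `C' ∩ Pᵢ₊₁` coincide. So the weight of `jᵢ` counted on the left
is bounded by `f (C' ∩ Pᵢ₊₁) - f (C' ∩ Pᵢ)`, and these increments telescope to
`f C' - f ∅ = f C'`.
-/

theorem List.toFinset_take_add_one {α : Type*} [DecidableEq α] (l : List α) (i : Fin l.length) :
    (l.take (i + 1)).toFinset = insert (l.get i) (l.take i).toFinset := by
  rw [List.take_add_one, List.toFinset_append, List.getElem?_eq_getElem i.isLt]
  simp

theorem marginal_gain_le_inter {α : Type*} [DecidableEq α] {f : Finset α → ℝ}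
    (hsub : ∀ S T : Finset α, S ⊆ T → ∀ a ∉ T, f (insert a T) - f T ≤ f (insert a S) - f S)
    (A T : Finset α) (a : α) :
    (if a ∈ A then f (insert a T) - f T else 0) ≤ f (A ∩ insert a T) - f (A ∩ T) := by
  split_ifs with haA
  · rw [Finset.inter_insert_of_mem haA]
    by_cases haT : a ∈ T
    · have haAT : a ∈ A ∩ T := Finset.mem_inter.mpr ⟨haA, haT⟩
      simp [Finset.insert_eq_of_mem haT, Finset.insert_eq_of_mem haAT]
    · exact hsub _ _ Finset.inter_subset_right a haT
  · rw [Finset.inter_insert_of_notMem haA, sub_self]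

theorem stmt_1_general {α : Type*} [DecidableEq α] (f : Finset α → ℝ)
    (hsub : ∀ S T : Finset α, S ⊆ T → ∀ a ∉ T,
      f (insert a T) - f T ≤ f (insert a S) - f S)
    (hempty : f ∅ = 0)
    (l : List α)
    (w : ℕ → ℝ)
    (hw : ∀ i : Fin l.length,
      w i = f ((l.take (i + 1)).toFinset) - f ((l.take i).toFinset))
    (C' : Finset α) (hC' : C' ⊆ l.toFinset) :
    ∑ i : Fin l.length, (if l.get i ∈ C' then w i else 0) ≤ f C' := by
  set F : ℕ → ℝ := fun k => f (C' ∩ (l.take k).toFinset)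
  calc ∑ i : Fin l.length, (if l.get i ∈ C' then w i else 0)
      ≤ ∑ i : Fin l.length, (F (i + 1) - F i) := by
        refine Finset.sum_le_sum fun i _ => ?_
        simpa only [F, hw i, List.toFinset_take_add_one l i] using
          marginal_gain_le_inter hsub C' (l.take i).toFinset (l.get i)
    _ = F l.length - F 0 := by
        rw [Fin.sum_univ_eq_sum_range (fun i => F (i + 1) - F i), Finset.sum_range_sub]
    _ = f C' := by
        simp [F, hempty, Finset.inter_eq_left.mpr hC']

/-- Let `f` be a monotone submodular function with `f ∅ = 0`, and let `C` be a finite set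
given by a duplicate-free list `l = [j₁, …, j_r]` (an arbitrary order).  Define the weight of
the `i`-th element as the marginal gain `w i = f {j₁,…,j_{i+1}} - f {j₁,…,j_i}`.  Then for every
subset `C' ⊆ C`, we have `f C' ≥ ∑_{jᵢ ∈ C'} w i`. -/
theorem stmt_1 {α : Type*} [DecidableEq α] (f : Finset α → ℝ)
    (hmono : ∀ S T : Finset α, S ⊆ T → f S ≤ f T)
    (hsub : ∀ S T : Finset α, S ⊆ T → ∀ a ∉ T,
      f (insert a T) - f T ≤ f (insert a S) - f S)
    (hempty : f ∅ = 0)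
    (l : List α) (hl : l.Nodup)
    (w : ℕ → ℝ)
    (hw : ∀ i : Fin l.length,
      w i = f ((l.take (i + 1)).toFinset) - f ((l.take i).toFinset))
    (C' : Finset α) (hC' : C' ⊆ l.toFinset) :
    ∑ i : Fin l.length, (if l.get i ∈ C' then w i else 0) ≤ f C' :=
  stmt_1_general f hsub hempty l w hw C' hC'
end

section
/- Let f be a monotone submodular function with f(∅)=0 and let C be a finite set with f(C) ≥ T. Suppose every singleton satisfies f({j}) ≤ T/100 for all j ∈ C. Let C₁ ⊆ C be a minimal subset with f(C₁) ≥ T/5, i.e., f(C₁ \ {j}) < T/5 for all j ∈ C₁. Then f(C \ C₁) ≥ 4T/5 - T/100. -/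
/-- Let `f` be monotone submodular with `f ∅ = 0`, `C` finite with `f C ≥ T`, every
singleton thin (`f {j} ≤ T/100` for `j ∈ C`), and `C₁ ⊆ C` a minimal subset with
`f C₁ ≥ T/5` (removing any element drops below `T/5`).  Then `f (C \ C₁) ≥ 4T/5 - T/100`. -/
theorem stmt_2 {α : Type*} [DecidableEq α] (f : Finset α → ℝ)
    (hmono : ∀ S T : Finset α, S ⊆ T → f S ≤ f T)
    (hsub : ∀ S T : Finset α, S ⊆ T → ∀ a ∉ T,
      f (insert a T) - f T ≤ f (insert a S) - f S)
    (hempty : f ∅ = 0)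
    (T : ℝ) (hT : 0 < T)
    (C : Finset α) (hC : T ≤ f C)
    (hthin : ∀ j ∈ C, f {j} ≤ T / 100)
    (C₁ : Finset α) (hC₁sub : C₁ ⊆ C) (hC₁ : T / 5 ≤ f C₁)
    (hmin : ∀ j ∈ C₁, f (C₁ \ {j}) < T / 5) :
    4 * T / 5 - T / 100 ≤ f (C \ C₁) := by
  -- subadditivity
  have subadd : ∀ A B : Finset α, f (A ∪ B) ≤ f A + f B := by
    intro A B
    induction B using Finset.induction with
    | empty => simp [hempty]
    | @insert a B ha ih =>
      by_cases h : a ∈ A ∪ B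
      · have h1 : A ∪ insert a B = A ∪ B := by
          ext x; simp only [Finset.mem_union, Finset.mem_insert]
          constructor
          · rintro (hx | rfl | hx)
            · exact Or.inl hx
            · simpa using h
            · exact Or.inr hx
          · rintro (hx | hx); exacts [Or.inl hx, Or.inr (Or.inr hx)]
        have := hmono B (insert a B) (Finset.subset_insert _ _)
        rw [h1]; linarith
      · have h2 : A ∪ insert a B = insert a (A ∪ B) := by
          ext x; simp [Finset.mem_union, Finset.mem_insert]
        have hs := hsub B (A ∪ B) Finset.subset_union_right a h
        rw [h2]; linarith
  -- C₁ nonempty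
  have hne : C₁.Nonempty := by
    rcases Finset.eq_empty_or_nonempty C₁ with rfl | h
    · rw [hempty] at hC₁; linarith
    · exact h
  obtain ⟨j, hj⟩ := hne
  have h1 : f C₁ ≤ f {j} + f (C₁ \ {j}) := by
    have : C₁ = {j} ∪ (C₁ \ {j}) := by
      ext x; simp only [Finset.mem_union, Finset.mem_sdiff, Finset.mem_singleton]
      constructor
      · intro hx; by_cases hxj : x = j; exacts [Or.inl hxj, Or.inr ⟨hx, hxj⟩]
      · rintro (rfl | ⟨hx, _⟩); exacts [hj, hx]
    calc f C₁ = f ({j} ∪ (C₁ \ {j})) := by rw [← this]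
      _ ≤ f {j} + f (C₁ \ {j}) := subadd _ _
  have h2 : f C ≤ f (C \ C₁) + f C₁ := by
    have : C = (C \ C₁) ∪ C₁ := by
      ext x; simp only [Finset.mem_union, Finset.mem_sdiff]
      constructor
      · intro hx; by_cases hx1 : x ∈ C₁; exacts [Or.inr hx1, Or.inl ⟨hx, hx1⟩]
      · rintro (⟨hx, _⟩ | hx); exacts [hx, hC₁sub hx]
    calc f C = f ((C \ C₁) ∪ C₁) := by rw [← this]
      _ ≤ f (C \ C₁) + f C₁ := subadd _ _
  have h3 := hmin j hj
  have h4 := hthin j (hC₁sub hj)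
  linarith
end

section
/- Let f be a monotone submodular function with f(∅)=0 and C a finite set with f(C) ≥ T, where f({j}) ≤ T/100 for all j ∈ C. Then there exist four pairwise disjoint subsets C₁, C₂, C₃, C₄ ⊆ C with f(C_i) ≥ T/5 for each i. -/
/-- A configuration `C` of value at least `T` consisting only of thin resources
(`f {j} ≤ T/100`) can be split into four pairwise disjoint subsets each of value
at least `T/5`, when `f` is monotone submodular with `f ∅ = 0`. -/
theorem stmt_3 {α : Type*} [DecidableEq α] (f : Finset α → ℝ)
    (hmono : ∀ S T : Finset α, S ⊆ T → f S ≤ f T)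
    (hsub : ∀ S T : Finset α, S ⊆ T → ∀ a ∉ T,
      f (insert a T) - f T ≤ f (insert a S) - f S)
    (hempty : f ∅ = 0)
    (T : ℝ) (hT : 0 < T)
    (C : Finset α) (hC : T ≤ f C)
    (hthin : ∀ j ∈ C, f {j} ≤ T / 100) :
    ∃ C₁ C₂ C₃ C₄ : Finset α,
      C₁ ⊆ C ∧ C₂ ⊆ C ∧ C₃ ⊆ C ∧ C₄ ⊆ C ∧
      Disjoint C₁ C₂ ∧ Disjoint C₁ C₃ ∧ Disjoint C₁ C₄ ∧
      Disjoint C₂ C₃ ∧ Disjoint C₂ C₄ ∧ Disjoint C₃ C₄ ∧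
      T / 5 ≤ f C₁ ∧ T / 5 ≤ f C₂ ∧ T / 5 ≤ f C₃ ∧ T / 5 ≤ f C₄ := by
  classical
  -- subadditivity on disjoint sets
  have subadd : ∀ A B : Finset α, Disjoint A B → f (A ∪ B) ≤ f A + f B := by
    intro A B
    induction B using Finset.induction_on with
    | empty => intro _; simp [hempty]
    | @insert b B hb ih =>
      intro hAB
      have hbA : b ∉ A := (Finset.disjoint_insert_right.mp hAB).1
      have hAB' : Disjoint A B := (Finset.disjoint_insert_right.mp hAB).2
      have hbAB : b ∉ A ∪ B := Finset.notMem_union.mpr ⟨hbA, hb⟩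
      have h1 : f (insert b (A ∪ B)) - f (A ∪ B) ≤ f (insert b B) - f B :=
        hsub B (A ∪ B) Finset.subset_union_right b hbAB
      have h2 : f (A ∪ B) ≤ f A + f B := ih hAB'
      have heq : A ∪ insert b B = insert b (A ∪ B) := Finset.union_insert _ _ _
      rw [heq]
      linarith
  -- peeling lemma
  have peel : ∀ D : Finset α, D ⊆ C → T / 5 ≤ f D →
      ∃ S, S ⊆ D ∧ T / 5 ≤ f S ∧ f S ≤ T / 5 + T / 100 := by
    intro D hD hfD
    set P := D.powerset.filter (fun S => T / 5 ≤ f S) with hP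
    have hPne : P.Nonempty := ⟨D, by simp [hP, hfD]⟩
    obtain ⟨S, hSP, hmin⟩ := P.exists_min_image Finset.card hPne
    obtain ⟨hSD, hfS⟩ : S ⊆ D ∧ T / 5 ≤ f S := by
      simpa [hP, Finset.mem_filter, Finset.mem_powerset] using hSP
    have hSne : S.Nonempty := by
      rcases S.eq_empty_or_nonempty with rfl | h
      · rw [hempty] at hfS; linarith
      · exact h
    obtain ⟨s, hs⟩ := hSne
    have hless : f (S.erase s) < T / 5 := by
      by_contra h
      push_neg at h
      have hmem : S.erase s ∈ P := by
        simp only [hP, Finset.mem_filter, Finset.mem_powerset]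
        exact ⟨(S.erase_subset s).trans hSD, h⟩
      have h1 := hmin _ hmem
      have h2 : (S.erase s).card < S.card := Finset.card_erase_lt_of_mem hs
      omega
    have hsC : s ∈ C := hD (hSD hs)
    have hsplit : f S ≤ f (S.erase s) + f {s} := by
      have heq : S.erase s ∪ {s} = S := by
        rw [Finset.union_comm]
        show insert s (S.erase s) = S
        exact Finset.insert_erase hs
      calc f S = f (S.erase s ∪ {s}) := by rw [heq]
        _ ≤ f (S.erase s) + f {s} :=
          subadd _ _ (Finset.disjoint_singleton_right.mpr (Finset.notMem_erase s S))
    have := hthin s hsC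
    exact ⟨S, hSD, hfS, by linarith⟩
  have hT5 : T / 5 ≤ f C := by linarith
  obtain ⟨S1, hS1C, hfS1, hfS1'⟩ := peel C Finset.Subset.rfl hT5
  have hD2eq : S1 ∪ (C \ S1) = C := Finset.union_sdiff_of_subset hS1C
  have hfD2 : T - (T / 5 + T / 100) ≤ f (C \ S1) := by
    have := subadd S1 (C \ S1) Finset.disjoint_sdiff
    rw [hD2eq] at this
    linarith
  have hD2C : C \ S1 ⊆ C := Finset.sdiff_subset
  obtain ⟨S2, hS2D, hfS2, hfS2'⟩ := peel (C \ S1) hD2C (by linarith)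
  have hD3eq : S2 ∪ ((C \ S1) \ S2) = C \ S1 := Finset.union_sdiff_of_subset hS2D
  have hfD3 : T - 2 * (T / 5 + T / 100) ≤ f ((C \ S1) \ S2) := by
    have := subadd S2 ((C \ S1) \ S2) Finset.disjoint_sdiff
    rw [hD3eq] at this
    linarith
  have hD3C : (C \ S1) \ S2 ⊆ C := Finset.sdiff_subset.trans hD2C
  obtain ⟨S3, hS3D, hfS3, hfS3'⟩ := peel ((C \ S1) \ S2) hD3C (by linarith)
  have hD4eq : S3 ∪ (((C \ S1) \ S2) \ S3) = (C \ S1) \ S2 :=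
    Finset.union_sdiff_of_subset hS3D
  have hfD4 : T - 3 * (T / 5 + T / 100) ≤ f (((C \ S1) \ S2) \ S3) := by
    have := subadd S3 (((C \ S1) \ S2) \ S3) Finset.disjoint_sdiff
    rw [hD4eq] at this
    linarith
  refine ⟨S1, S2, S3, ((C \ S1) \ S2) \ S3, hS1C, hS2D.trans hD2C, hS3D.trans hD3C,
    Finset.sdiff_subset.trans hD3C, ?_, ?_, ?_, ?_, ?_, ?_, hfS1, hfS2, hfS3, by linarith⟩
  · exact (Finset.sdiff_disjoint.mono_left hS2D).symm
  · exact (Finset.sdiff_disjoint.mono_left (hS3D.trans Finset.sdiff_subset)).symm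
  · exact (Finset.sdiff_disjoint.mono_left
      (Finset.sdiff_subset.trans Finset.sdiff_subset)).symm
  · exact (Finset.sdiff_disjoint.mono_left hS3D).symm
  · exact (Finset.sdiff_disjoint.mono_left Finset.sdiff_subset).symm
  · exact Finset.sdiff_disjoint.symm
end

section
/- Let each resource belong to at most ℓ configurations in a family C^{(k)}, let C be a fixed configuration with |C| ≥ ℓ^{k+3}, and form R_k by keeping each resource independently with probability ℓ^{-k}, where ℓ ≥ 300000 (log n)³. Then with probability at least 1 - 1/n^{10}: ∑_{C'∈C^{(k)}} |C' ∩ C ∩ R_k| ≤ (10/ℓ^k)·(|C| + ∑_{C'∈C^{(k)}} |C' ∩ C|). -/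
/-!
Writing `a j` for the number of configurations containing the resource `j`, double counting turns
`∑_{C'} |C' ∩ C ∩ R_k|` into the weighted Bernoulli sum `X = ∑_{j ∈ C} a j · 1[j ∈ R_k]`, whose
mean is `p ∑_{C'} |C' ∩ C|` with `p = ℓ^{-k}`, and whose weights are at most `ℓ`. The Chernoff
bound at `t = 2/ℓ` bounds the probability that `X` exceeds `10 p (|C| + ∑_{C'} |C' ∩ C|)` by
`exp(-20 p |C| / ℓ) ≤ exp(-20 ℓ²)`, because `p |C| ≥ ℓ³`; as `ℓ ≥ log n`, this is below
`n^{-10}`.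
-/

open MeasureTheory ProbabilityTheory Real Finset

theorem Finset.sum_card_inter_eq_sum_card_filter_mem {α : Type*} [DecidableEq α]
    (𝒞 : Finset (Finset α)) (s : Finset α) :
    ∑ t ∈ 𝒞, #(t ∩ s) = ∑ a ∈ s, #{t ∈ 𝒞 | a ∈ t} := by
  simp_rw [inter_comm _ s, ← filter_mem_eq_inter, card_eq_sum_ones, sum_filter]
  exact sum_comm

theorem Finset.sum_card_filter_inter_eq_sum_ite {α : Type*} [DecidableEq α]
    (𝒞 : Finset (Finset α)) (s : Finset α) (P : α → Prop) [DecidablePred P] :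
    (∑ t ∈ 𝒞, #((t ∩ s).filter P) : ℝ) =
      ∑ a ∈ s, if P a then (#{t ∈ 𝒞 | a ∈ t} : ℝ) else 0 := by
  simp_rw [← inter_filter, ← sum_filter]
  exact_mod_cast sum_card_inter_eq_sum_card_filter_mem 𝒞 _

lemma exp_two_mul_sub_one_le {x : ℝ} (h0 : 0 ≤ x) (h1 : x ≤ 1) : exp (2 * x) - 1 ≤ 7 * x := by
  have hchord : exp (2 * x) ≤ 1 - x + x * exp 2 := by
    simpa [smul_eq_mul, mul_comm] using
      convexOn_exp.2 (Set.mem_univ 0) (Set.mem_univ 2) (sub_nonneg.2 h1) h0 (by ring)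
  have hexp2 : exp 2 ≤ 8 := by
    have := exp_one_lt_d9
    rw [show (2 : ℝ) = 1 + 1 by norm_num, exp_add]
    nlinarith [exp_pos 1]
  nlinarith

lemma exp_mul_ite_eq_indicator {Ω : Type*} (Y : Ω → Bool) (a t : ℝ) :
    (fun ω => exp (t * if Y ω then a else 0)) =
      fun ω => {ω | Y ω}.indicator (fun _ => exp (t * a) - 1) ω + 1 := by
  ext ω
  by_cases h : Y ω <;> simp [h]

section Chernoff

variable {Ω ι : Type*} [MeasurableSpace Ω] {μ : Measure Ω} [IsProbabilityMeasure μ]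

lemma integrable_exp_mul_ite {Y : Ω → Bool} (hY : Measurable Y) (a t : ℝ) :
    Integrable (fun ω => exp (t * if Y ω then a else 0)) μ := by
  rw [exp_mul_ite_eq_indicator]
  exact ((integrable_const _).indicator (hY (measurableSet_singleton true))).add
    (integrable_const 1)

lemma mgf_ite {Y : Ω → Bool} (hY : Measurable Y) (a t : ℝ) :
    mgf (fun ω => if Y ω then a else 0) μ t = 1 + μ.real {ω | Y ω} * (exp (t * a) - 1) := by
  have hA : MeasurableSet {ω | Y ω} := hY (measurableSet_singleton true)
  rw [mgf, exp_mul_ite_eq_indicator, integral_add ((integrable_const _).indicator hA)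
    (integrable_const 1), integral_indicator_const _ hA]
  simp [add_comm]

lemma mgf_ite_le {Y : Ω → Bool} (hY : Measurable Y) (a t : ℝ) :
    mgf (fun ω => if Y ω then a else 0) μ t ≤ exp (μ.real {ω | Y ω} * (exp (t * a) - 1)) := by
  rw [mgf_ite hY, add_comm]
  exact add_one_le_exp _

theorem measureReal_le_sum_ite_le_exp {Y : ι → Ω → Bool} (hY : ∀ j, Measurable (Y j))
    (hind : iIndepFun Y μ) (a : ι → ℝ) (s : Finset ι) {t : ℝ} (ht : 0 ≤ t) (T : ℝ) :
    μ.real {ω | T ≤ ∑ j ∈ s, if Y j ω then a j else 0} ≤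
      exp (-t * T + ∑ j ∈ s, μ.real {ω | Y j ω} * (exp (t * a j) - 1)) := by
  set X : ι → Ω → ℝ := fun j ω => if Y j ω then a j else 0
  have hXmeas : ∀ j, Measurable (X j) := fun j =>
    (measurable_of_countable fun b : Bool => if b then a j else 0).comp (hY j)
  have hXind : iIndepFun X μ :=
    hind.comp (fun j (b : Bool) => if b then a j else 0) fun j => measurable_of_countable _
  calc μ.real {ω | T ≤ ∑ j ∈ s, X j ω}
      ≤ exp (-t * T) * mgf (∑ j ∈ s, X j) μ t := by
        simpa only [Finset.sum_apply] using measure_ge_le_exp_mul_mgf T ht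
          (hXind.integrable_exp_mul_sum hXmeas fun j _ => integrable_exp_mul_ite (hY j) _ _)
    _ = exp (-t * T) * ∏ j ∈ s, mgf (X j) μ t := by rw [hXind.mgf_sum hXmeas]
    _ ≤ exp (-t * T) * ∏ j ∈ s, exp (μ.real {ω | Y j ω} * (exp (t * a j) - 1)) := by
        gcongr with j
        · exact fun j _ => mgf_nonneg
        · exact mgf_ite_le (hY j) _ _
    _ = _ := by rw [← exp_sum, ← exp_add]

theorem measureReal_ten_mul_le_sum_ite_le_exp_neg {Y : ι → Ω → Bool}
    (hY : ∀ j, Measurable (Y j)) (hind : iIndepFun Y μ) {p L : ℝ}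
    (hp : ∀ j, μ.real {ω | Y j ω} = p) (hL : 0 < L)
    {a : ι → ℝ} (ha₀ : ∀ j, 0 ≤ a j) (haL : ∀ j, a j ≤ L) (s : Finset ι) (c : ℝ) :
    μ.real {ω | 10 * p * (c + ∑ j ∈ s, a j) ≤ ∑ j ∈ s, if Y j ω then a j else 0} ≤
      exp (-(20 * (p * c) / L)) := by
  -- at `t = 2 / L` each weight contributes `p (e^{2 a / L} - 1) ≤ 7 p a / L`, less than the
  -- `20 p a / L` it adds to `t` times the threshold
  have hsum : ∑ j ∈ s, p * (exp (2 / L * a j) - 1) ≤ 7 * (p * ∑ j ∈ s, a j) / L := by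
    rw [mul_sum, mul_sum, sum_div]
    gcongr with j
    have hp₀ : 0 ≤ p := hp j ▸ measureReal_nonneg
    calc p * (exp (2 / L * a j) - 1) = p * (exp (2 * (a j / L)) - 1) := by ring_nf
      _ ≤ p * (7 * (a j / L)) := by
        gcongr
        exact exp_two_mul_sub_one_le (div_nonneg (ha₀ j) hL.le) ((div_le_one hL).2 (haL j))
      _ = 7 * (p * a j) / L := by ring
  have hpS : 0 ≤ p * ∑ j ∈ s, a j := by
    rw [mul_sum]
    exact sum_nonneg fun j _ => mul_nonneg (hp j ▸ measureReal_nonneg) (ha₀ j)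
  calc _ ≤ exp (-(2 / L) * (10 * p * (c + ∑ j ∈ s, a j)) +
          ∑ j ∈ s, p * (exp (2 / L * a j) - 1)) := by
        simpa only [hp] using
          measureReal_le_sum_ite_le_exp hY hind a s (t := 2 / L) (by positivity) _
    _ ≤ exp (-(2 / L) * (10 * p * (c + ∑ j ∈ s, a j)) + 7 * (p * ∑ j ∈ s, a j) / L) := by
        gcongr
    _ ≤ exp (-(20 * (p * c) / L)) := by
        gcongr
        rw [← sub_nonneg]
        convert div_nonneg (mul_nonneg (by norm_num : (0 : ℝ) ≤ 13) hpS) hL.le using 1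
        field_simp
        ring

lemma ofReal_one_sub_le_of_measureReal_compl_le {s : Set Ω} {ε : ℝ} (h : μ.real sᶜ ≤ ε) :
    ENNReal.ofReal (1 - ε) ≤ μ s := by
  have : 1 ≤ μ.real s + μ.real sᶜ := by
    simpa using measureReal_union_le (μ := μ) s sᶜ
  rw [← ofReal_measureReal]
  exact ENNReal.ofReal_le_ofReal (by linarith)

end Chernoff

/-- Let each resource belong to at most `ℓ` configurations of the family `𝒞`, let `C` be a
fixed configuration with `|C| ≥ ℓ^{k+3}`, and keep each resource independently with
probability `ℓ^{-k}` (the random set `R_k = {j | Y j = true}`), where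
`ℓ ≥ 300000·(log n)³` and `n ≥ 2`.  Then with probability at least `1 - 1/n^{10}`,
`∑_{C' ∈ 𝒞} |C' ∩ C ∩ R_k| ≤ (10/ℓ^k)·(|C| + ∑_{C' ∈ 𝒞} |C' ∩ C|)`. -/
theorem stmt_16 {Ω ρ : Type*} [MeasureSpace Ω] [IsProbabilityMeasure (ℙ : Measure Ω)]
    [DecidableEq ρ]
    (n : ℕ) (hn : 2 ≤ n) (ℓ : ℝ) (hℓ : 300000 * (Real.log n) ^ 3 ≤ ℓ)
    (k : ℕ) (𝒞 : Finset (Finset ρ)) (C : Finset ρ)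
    (hdeg : ∀ j : ρ, ((𝒞.filter (fun C' => j ∈ C')).card : ℝ) ≤ ℓ)
    (hC : ℓ ^ (k + 3) ≤ (C.card : ℝ))
    (Y : ρ → Ω → Bool)
    (hmeas : ∀ j, Measurable (Y j))
    (hindep : iIndepFun Y ℙ)
    (hp : ∀ j, (ℙ {ω | Y j ω = true}).toReal = (1 / ℓ) ^ k) :
    ENNReal.ofReal (1 - 1 / (n : ℝ) ^ 10) ≤
      ℙ {ω | ∑ C' ∈ 𝒞, (((C' ∩ C).filter (fun j => Y j ω = true)).card : ℝ) ≤
        (10 / ℓ ^ k) * ((C.card : ℝ) + ∑ C' ∈ 𝒞, ((C' ∩ C).card : ℝ))} := by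
  set p : ℝ := (1 / ℓ) ^ k
  set a : ρ → ℝ := fun j => (#{C' ∈ 𝒞 | j ∈ C'} : ℝ)
  have hevent : ∀ ω, (∑ C' ∈ 𝒞, #((C' ∩ C).filter fun j => Y j ω = true) : ℝ) =
      ∑ j ∈ C, if Y j ω then a j else 0 :=
    fun ω => sum_card_filter_inter_eq_sum_ite 𝒞 C _
  have hS : ∑ C' ∈ 𝒞, (#(C' ∩ C) : ℝ) = ∑ j ∈ C, a j := by
    simp only [a, ← Nat.cast_sum, sum_card_inter_eq_sum_card_filter_mem]
  have hlog2 : 0.69 ≤ Real.log n := by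
    have := log_le_log (by norm_num) (show (2 : ℝ) ≤ n by exact_mod_cast hn)
    linarith [log_two_gt_d9]
  have hℓ1 : 1 ≤ ℓ := by nlinarith [pow_le_pow_left₀ (by norm_num) hlog2 3]
  have hlogℓ : Real.log n ≤ ℓ := by nlinarith [pow_le_pow_left₀ (by norm_num) hlog2 2]
  have hpC : ℓ ^ 2 ≤ p * C.card / ℓ := by
    rw [le_div_iff₀ (by positivity)]
    calc ℓ ^ 2 * ℓ = p * ℓ ^ (k + 3) := by simp [p, pow_add]; field_simp
      _ ≤ p * C.card := by gcongr
  have hn10 : exp (10 * Real.log n) = (n : ℝ) ^ 10 := by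
    rw [← exp_log (x := (n : ℝ) ^ 10) (by positivity), log_pow]
    norm_num
  apply ofReal_one_sub_le_of_measureReal_compl_le
  calc _ ≤ (ℙ : Measure Ω).real
        {ω | 10 * p * (C.card + ∑ j ∈ C, a j) ≤ ∑ j ∈ C, if Y j ω then a j else 0} := by
        refine measureReal_mono fun ω hω => ?_
        simp only [Set.mem_compl_iff, Set.mem_ofPred_eq, not_le, hevent, hS] at hω
        simpa [p, div_eq_mul_one_div 10 (ℓ ^ k), mul_assoc] using hω.le
    _ ≤ exp (-(20 * (p * C.card) / ℓ)) :=
        measureReal_ten_mul_le_sum_ite_le_exp_neg hmeas hindep hp (by positivity)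
          (fun _ => Nat.cast_nonneg _) hdeg C _
    _ ≤ exp (-(10 * Real.log n)) := exp_le_exp.2 (by rw [mul_div_assoc]; nlinarith)
    _ = 1 / (n : ℝ) ^ 10 := by rw [exp_neg, hn10, one_div]
end
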